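/- arXiv:1705.08674 — 2 statements merged into one kernel-verified Lean document; each statement's English description precedes it below -/
import Mathlib

section
/- If G = Q_n(X) is a daisy cube, then D_{G,u}(x, −x) = 1 holds for every vertex u of G; that is, for every vertex u of G and every value of x, Σ_{k,d≥0} c_{k,d}(G) x^k (−x)^d = 1, where c_{k,d}(G) counts induced k-cubes of G at distance d from u. -/
/-!
A down-closed set `S ⊆ Q_n` induces an isometric subgraph of `Q_n`. An induced `Q_k` in `Q_n` is
a subcube, because two vertices of `Q_n` have at most two common neighbours; so the induced
`k`-cubes of `Q_n(S)` are the intervals `[b, t]` with `t ∈ S` and `hammingDist b t = k`, and the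
distance from `u` to `[b, t]` is attained at `u ⊓ t ⊔ b`. Thus `D(x, -x)` is a sum over pairs
`b ≤ t`, `t ∈ S`, of products of one factor per coordinate. Summing over `b` kills every `t ≰ u`,
in particular every `t ∉ S`, so the sum runs over all of `B^n` and factorises into coordinate
sums, each equal to `1`.
-/

def Qcube (n : ℕ) : SimpleGraph (Fin n → Bool) where
  Adj u v := hammingDist u v = 1
  symm := ⟨fun u v h => by rwa [hammingDist_comm]⟩
  loopless := ⟨fun u h => by simp [hammingDist_self] at h⟩

def daisySet {n : ℕ} (X : Set (Fin n → Bool)) : Set (Fin n → Bool) :=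
  {u | ∃ x ∈ X, u ≤ x}

noncomputable def cubeCount {V : Type*} (G : SimpleGraph V) (k : ℕ) : ℕ :=
  Set.ncard {S : Set V | Nonempty (G.induce S ≃g Qcube k)}

noncomputable def distToSet {V : Type*} (G : SimpleGraph V) (u : V) (S : Set V) : ℕ :=
  sInf (G.dist u '' S)

noncomputable def distCubeCount {V : Type*} (G : SimpleGraph V) (u : V) (k d : ℕ) : ℕ :=
  Set.ncard {S : Set V | Nonempty (G.induce S ≃g Qcube k) ∧ distToSet G u S = d}

noncomputable def wCount {V : Type*} (G : SimpleGraph V) (u : V) (d : ℕ) : ℕ :=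
  Set.ncard {v : V | G.dist u v = d}

def interval {V : Type*} (G : SimpleGraph V) (u v : V) : Set V :=
  {w | G.dist u v = G.dist u w + G.dist w v}

open Finset Function

section Flip

variable {ι : Type*} [DecidableEq ι]

def flipCoord (v : ι → Bool) (j : ι) : ι → Bool := update v j (!v j)

@[simp] lemma flipCoord_apply_self (v : ι → Bool) (j : ι) : flipCoord v j j = !v j :=
  update_self ..

@[simp] lemma flipCoord_apply_of_ne {v : ι → Bool} {i j : ι} (h : i ≠ j) :
    flipCoord v j i = v i :=
  update_of_ne h ..

lemma flipCoord_apply (v : ι → Bool) (i j : ι) :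
    flipCoord v j i = if i = j then !v i else v i := by
  split_ifs with h
  · subst h; simp
  · simp [h]

@[simp] lemma flipCoord_flipCoord_self (v : ι → Bool) (j : ι) :
    flipCoord (flipCoord v j) j = v := by
  ext i; by_cases h : i = j <;> simp [h]

lemma flipCoord_comm (v : ι → Bool) (i j : ι) :
    flipCoord (flipCoord v i) j = flipCoord (flipCoord v j) i := by
  rcases eq_or_ne i j with rfl | hij
  · rfl
  ext l; by_cases hi : l = i <;> by_cases hj : l = j <;> simp_all

variable [Fintype ι]

lemma hammingDist_flipCoord_self (v : ι → Bool) (j : ι) : hammingDist v (flipCoord v j) = 1 := by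
  rw [hammingDist, card_eq_one]
  exact ⟨j, by ext i; by_cases h : i = j <;> simp [h]⟩

lemma hammingDist_eq_one_iff {v w : ι → Bool} : hammingDist v w = 1 ↔ ∃ j, w = flipCoord v j := by
  refine ⟨fun h => ?_, fun ⟨j, hj⟩ => hj ▸ hammingDist_flipCoord_self v j⟩
  obtain ⟨j, hj⟩ := card_eq_one.mp h
  refine ⟨j, funext fun i => ?_⟩
  have hi := congrArg (i ∈ ·) hj
  simp only [mem_filter, mem_univ, true_and, mem_singleton, eq_iff_iff] at hi
  by_cases h : i = j
  · subst h; simpa [Bool.eq_not] using (Ne.symm (hi.mpr rfl))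
  · simpa [h] using (not_not.mp (hi.not.mpr h)).symm

lemma hammingDist_flipCoord_add_one {v w : ι → Bool} {j : ι} (h : v j ≠ w j) :
    hammingDist (flipCoord v j) w + 1 = hammingDist v w := by
  have : ({i | flipCoord v j i ≠ w i} : Finset ι) = ({i | v i ≠ w i} : Finset ι).erase j := by
    ext i; by_cases hi : i = j
    · subst hi; cases hv : v i <;> cases hw : w i <;> simp_all
    · simp [hi]
  rw [hammingDist, hammingDist, this, card_erase_add_one (by simpa using h)]

lemma card_filter_flipCoord_lt {v : ι → Bool} {i : ι} (hi : v i = true) :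
    #{l | flipCoord v i l = true} < #{l | v l = true} := by
  refine card_lt_card ⟨fun l => ?_, fun h => ?_⟩
  · by_cases hl : l = i <;> simp_all
  · simpa [hi] using h (mem_filter.mpr ⟨mem_univ i, hi⟩)

end Flip

lemma Icc_eq_setOf_forall_eq {ι : Type*} {b t : ι → Bool} (hbt : b ≤ t) :
    Set.Icc b t = {w | ∀ j, b j = t j → w j = b j} := by
  ext w
  refine ⟨fun hw j hj => le_antisymm (hj ▸ hw.2 j) (hw.1 j),
    fun hw => ⟨fun j => ?_, fun j => ?_⟩⟩ <;>
  · have hbtj := hbt j; have hwj := hw j; clear hw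
    cases hb : b j <;> cases ht : t j <;> cases hw : w j <;> simp_all

lemma inf_sup_mem_Icc {α : Type*} [Lattice α] {b t : α} (hbt : b ≤ t) (u : α) :
    u ⊓ t ⊔ b ∈ Set.Icc b t :=
  ⟨le_sup_right, sup_le inf_le_right hbt⟩

lemma hammingDist_inf_sup_le {ι : Type*} [Fintype ι] {u b t w : ι → Bool}
    (hw : w ∈ Set.Icc b t) : hammingDist u (u ⊓ t ⊔ b) ≤ hammingDist u w := by
  refine card_le_card fun j => ?_
  have hb := hw.1 j; have ht := hw.2 j; clear hw
  simp only [mem_filter, mem_univ, true_and, Pi.sup_apply, Pi.inf_apply]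
  cases u j <;> cases hb' : b j <;> cases ht' : t j <;> cases hw' : w j <;> simp_all

lemma SimpleGraph.nonempty_induce_iso_iff {V W : Type*} {G : SimpleGraph V} {H : SimpleGraph W}
    {s : Set V} : Nonempty (G.induce s ≃g H) ↔ ∃ f : H ↪g G, Set.range f = s := by
  constructor
  · rintro ⟨e⟩
    exact ⟨(Embedding.induce s).comp e.symm.toEmbedding, by
      rw [Embedding.coe_comp, Set.range_comp, RelIso.coe_toRelEmbedding, e.symm.surjective.range_eq,
        Set.image_univ]
      exact Subtype.range_coe⟩
  · rintro ⟨f, rfl⟩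
    exact ⟨f.isoInduceRange.symm⟩

namespace Qcube

variable {n k : ℕ}

lemma adj_iff_exists_flipCoord {v w : Fin n → Bool} :
    (Qcube n).Adj v w ↔ ∃ j, w = flipCoord v j :=
  hammingDist_eq_one_iff

lemma adj_flipCoord (v : Fin n → Bool) (j : Fin n) : (Qcube n).Adj v (flipCoord v j) :=
  adj_iff_exists_flipCoord.mpr ⟨j, rfl⟩

lemma eq_or_eq_of_adj_flipCoord_of_adj_flipCoord {p s : Fin n → Bool} {i j : Fin n} (hij : i ≠ j)
    (hi : (Qcube n).Adj (flipCoord p i) s) (hj : (Qcube n).Adj (flipCoord p j) s) :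
    s = p ∨ s = flipCoord (flipCoord p i) j := by
  obtain ⟨α, rfl⟩ := adj_iff_exists_flipCoord.mp hi
  obtain ⟨β, hβ⟩ := adj_iff_exists_flipCoord.mp hj
  by_cases hαi : α = i
  · simp [hαi]
  have hβi : β = i := by
    by_contra hβi
    simpa [flipCoord_apply, hαi, hβi, Ne.symm hαi, Ne.symm hβi, hij] using congrFun hβ i
  have hαj : α = j := by
    by_contra hαj
    simpa [flipCoord_apply, hαj, hβi, Ne.symm hαj, hij, Ne.symm hij] using congrFun hβ j
  exact Or.inr (hαj ▸ rfl)

lemma eq_or_eq_of_adj_of_adj {p q r r' s : Fin n → Bool} (hpq : p ≠ q)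
    (hrp : (Qcube n).Adj r p) (hrq : (Qcube n).Adj r q)
    (hr'p : (Qcube n).Adj p r') (hr'q : (Qcube n).Adj q r')
    (hsp : (Qcube n).Adj p s) (hsq : (Qcube n).Adj q s) (hrr' : r ≠ r') :
    s = r ∨ s = r' := by
  obtain ⟨i, rfl⟩ := adj_iff_exists_flipCoord.mp hrp
  obtain ⟨j, rfl⟩ := adj_iff_exists_flipCoord.mp hrq
  have hij : i ≠ j := by rintro rfl; exact hpq rfl
  have hr' := (eq_or_eq_of_adj_flipCoord_of_adj_flipCoord hij hr'p hr'q).resolve_left hrr'.symm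
  exact hr' ▸ eq_or_eq_of_adj_flipCoord_of_adj_flipCoord hij hsp hsq

theorem embedding_ext {f g : Qcube k ↪g Qcube n} (h₀ : f ⊥ = g ⊥)
    (h₁ : ∀ i, f (flipCoord ⊥ i) = g (flipCoord ⊥ i)) (v : Fin k → Bool) : f v = g v := by
  induction hm : #{l | v l = true} using Nat.strong_induction_on generalizing v with
  | _ m ih =>
  by_cases hv : v = ⊥
  · exact hv ▸ h₀
  obtain ⟨i, hi⟩ : ∃ i, v i = true := by
    by_contra! h; exact hv (funext fun l => by simpa using h l)
  set v₁ := flipCoord v i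
  by_cases hv₁ : v₁ = ⊥
  · rw [← flipCoord_flipCoord_self v i, show flipCoord v i = ⊥ from hv₁]; exact h₁ i
  obtain ⟨i', hi'⟩ : ∃ i', v₁ i' = true := by
    by_contra! h; exact hv₁ (funext fun l => by simpa using h l)
  have hii' : i ≠ i' := by rintro rfl; simp [v₁, hi] at hi'
  set v₂ := flipCoord v i'
  set v₁₂ := flipCoord v₁ i'
  have hlt₁ : #{l | v₁ l = true} < m := hm ▸ card_filter_flipCoord_lt hi
  have hlt₂ : #{l | v₂ l = true} < m :=
    hm ▸ card_filter_flipCoord_lt (by simpa [v₁, hii'.symm] using hi')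
  have hlt₁₂ : #{l | v₁₂ l = true} < m := (card_filter_flipCoord_lt hi').trans hlt₁
  have hv₁₂ : v₁₂ = flipCoord v₂ i := flipCoord_comm v i i'
  have hv₁v₂ : v₁ ≠ v₂ := fun h => by simpa [v₁, v₂, hi, hii'] using congrFun h i
  have hvv₁₂ : v ≠ v₁₂ := fun h => by simpa [v₁₂, v₁, hi, hii'] using congrFun h i
  -- `g v` and `g v₁₂` are two common neighbours of `g v₁ ≠ g v₂`, and `f v` is another one
  rcases eq_or_eq_of_adj_of_adj (g.injective.ne hv₁v₂)
      (g.map_adj_iff.mpr (adj_flipCoord v i)) (g.map_adj_iff.mpr (adj_flipCoord v i'))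
      (g.map_adj_iff.mpr (adj_flipCoord v₁ i'))
      (g.map_adj_iff.mpr (hv₁₂ ▸ adj_flipCoord v₂ i : (Qcube k).Adj v₂ v₁₂))
      (ih _ hlt₁ v₁ rfl ▸ f.map_adj_iff.mpr (adj_flipCoord v i).symm)
      (ih _ hlt₂ v₂ rfl ▸ f.map_adj_iff.mpr (adj_flipCoord v i').symm)
      (g.injective.ne hvv₁₂) with h | h
  · exact h
  · exact absurd (f.injective (h.trans (ih _ hlt₁₂ v₁₂ rfl).symm)) hvv₁₂

/-- The affine map `v ↦ a + ∑ᵢ vᵢ e_{c i}` over `𝔽₂`. -/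
noncomputable def subcubeMap (a : Fin n → Bool) (c : Fin k → Fin n) (v : Fin k → Bool) :
    Fin n → Bool :=
  fun j => xor (a j) (extend c v ⊥ j)

variable {a : Fin n → Bool} {c : Fin k → Fin n}

lemma subcubeMap_apply_apply (hc : Injective c) (v : Fin k → Bool) (i : Fin k) :
    subcubeMap a c v (c i) = xor (a (c i)) (v i) := by
  simp [subcubeMap, hc.extend_apply]

lemma subcubeMap_apply_of_notMem (v : Fin k → Bool) {j : Fin n} (hj : j ∉ Set.range c) :
    subcubeMap a c v j = a j := by
  simp [subcubeMap, extend_apply' _ _ _ hj]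

lemma subcubeMap_bot (hc : Injective c) : subcubeMap a c ⊥ = a := by
  funext j
  by_cases hj : j ∈ Set.range c
  · obtain ⟨i, rfl⟩ := hj; simp [subcubeMap_apply_apply hc]
  · exact subcubeMap_apply_of_notMem _ hj

lemma subcubeMap_flipCoord_bot (hc : Injective c) (i : Fin k) :
    subcubeMap a c (flipCoord ⊥ i) = flipCoord a (c i) := by
  funext j
  by_cases hj : j ∈ Set.range c
  · obtain ⟨l, rfl⟩ := hj
    by_cases hl : l = i <;> simp [subcubeMap_apply_apply hc, hl, hc.ne]
  · rw [subcubeMap_apply_of_notMem _ hj, flipCoord_apply_of_ne (by rintro rfl; exact hj ⟨i, rfl⟩)]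

lemma hammingDist_subcubeMap (hc : Injective c) (v w : Fin k → Bool) :
    hammingDist (subcubeMap a c v) (subcubeMap a c w) = hammingDist v w := by
  have : ({j | subcubeMap a c v j ≠ subcubeMap a c w j} : Finset (Fin n)) =
      ({i | v i ≠ w i} : Finset (Fin k)).image c := by
    ext j
    by_cases hj : j ∈ Set.range c
    · obtain ⟨i, rfl⟩ := hj; simp [subcubeMap_apply_apply hc, hc.eq_iff]
    · simp only [mem_filter, mem_univ, true_and, subcubeMap_apply_of_notMem _ hj, ne_eq,
        not_true_eq_false, mem_image, false_iff, not_exists, not_and]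
      exact fun i _ h => hj ⟨i, h⟩
  rw [hammingDist, hammingDist, this, card_image_of_injective _ hc]

noncomputable def subcubeEmbedding (a : Fin n → Bool) (hc : Injective c) : Qcube k ↪g Qcube n where
  toFun := subcubeMap a c
  inj' v w h := hammingDist_eq_zero.mp <| by rw [← hammingDist_subcubeMap hc, h, hammingDist_self]
  map_rel_iff' {v w} := by
    change hammingDist (subcubeMap a c v) (subcubeMap a c w) = 1 ↔ hammingDist v w = 1
    rw [hammingDist_subcubeMap hc]

lemma range_subcubeMap (hc : Injective c) :
    Set.range (subcubeMap a c) = {w | ∀ j ∉ Set.range c, w j = a j} := by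
  refine Set.Subset.antisymm ?_ fun w hw => ⟨fun i => xor (a (c i)) (w (c i)), funext fun j => ?_⟩
  · rintro _ ⟨v, rfl⟩ j hj
    exact subcubeMap_apply_of_notMem v hj
  · by_cases hj : j ∈ Set.range c
    · obtain ⟨i, rfl⟩ := hj; simp [subcubeMap_apply_apply hc]
    · rw [subcubeMap_apply_of_notMem _ hj, hw j hj]

lemma exists_subcubeMap_eq (f : Qcube k ↪g Qcube n) :
    ∃ c : Fin k → Fin n, Injective c ∧ ⇑f = subcubeMap (f ⊥) c := by
  have := fun i => adj_iff_exists_flipCoord.mp (f.map_adj_iff.mpr (adj_flipCoord ⊥ i))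
  choose c hc using this
  have hinj : Injective c := fun i i' h => by
    have := congrFun (f.injective ((hc i).trans (h ▸ (hc i').symm))) i
    by_contra hii'
    simp [hii'] at this
  refine ⟨c, hinj, funext fun v => embedding_ext (g := subcubeEmbedding (f ⊥) hinj) ?_ ?_ v⟩
  · exact (subcubeMap_bot hinj).symm
  · intro i
    exact (hc i).trans (subcubeMap_flipCoord_bot hinj i).symm

theorem exists_range_eq_Icc (f : Qcube k ↪g Qcube n) :
    ∃ b t, b ≤ t ∧ hammingDist b t = k ∧ Set.range f = Set.Icc b t := by
  obtain ⟨c, hc, hf⟩ := exists_subcubeMap_eq f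
  have hfree (j : Fin n) (hj : j ∉ Set.range c) (β : Fin k → Bool) : extend c β (f ⊥) j = f ⊥ j :=
    extend_apply' _ _ _ hj
  have hbt : extend c ⊥ (f ⊥) ≤ extend c ⊤ (f ⊥) := fun j => by
    by_cases hj : j ∈ Set.range c
    · obtain ⟨i, rfl⟩ := hj; simp [hc.extend_apply]
    · rw [hfree j hj, hfree j hj]
  refine ⟨_, _, hbt, ?_, ?_⟩
  · have : ({j | extend c ⊥ (f ⊥) j ≠ extend c ⊤ (f ⊥) j} : Finset (Fin n)) = univ.image c := by
      ext j
      by_cases hj : j ∈ Set.range c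
      · obtain ⟨i, rfl⟩ := hj; simp [hc.extend_apply]
      · simp only [mem_filter, mem_univ, true_and, hfree j hj, ne_eq, not_true_eq_false,
          mem_image, false_iff, not_exists]
        exact fun i h => hj ⟨i, h⟩
    rw [hammingDist, this, card_image_of_injective _ hc, card_univ, Fintype.card_fin]
  · rw [congrArg Set.range hf, range_subcubeMap hc, Icc_eq_setOf_forall_eq hbt]
    ext w
    refine forall_congr' fun j => ?_
    by_cases hj : j ∈ Set.range c
    · obtain ⟨i, rfl⟩ := hj; simp [hc.extend_apply]
    · simp [hj, hfree j hj]

theorem exists_embedding_range_eq_Icc {b t : Fin n → Bool} (hbt : b ≤ t) :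
    ∃ f : Qcube (hammingDist b t) ↪g Qcube n, Set.range f = Set.Icc b t := by
  set D : Finset (Fin n) := {j | b j ≠ t j}
  set c : Fin #D → Fin n := fun i => D.equivFin.symm i
  have hc : Injective c := Subtype.val_injective.comp D.equivFin.symm.injective
  have hrange : Set.range c = {j | b j ≠ t j} := by
    ext j
    refine ⟨?_, fun hj => ⟨D.equivFin ⟨j, by simpa [D] using hj⟩, by simp [c]⟩⟩
    rintro ⟨i, rfl⟩
    exact (mem_filter.mp (D.equivFin.symm i).2).2
  refine ⟨subcubeEmbedding b hc, ?_⟩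
  change Set.range (subcubeMap b c) = _
  rw [range_subcubeMap hc, Icc_eq_setOf_forall_eq hbt, hrange]
  simp

end Qcube

lemma sum_range_sum_range_card_filter_mul {α R : Type*} [CommSemiring R] (s : Finset α)
    (κ δ : α → ℕ) {N : ℕ} (hκ : ∀ p ∈ s, κ p < N) (hδ : ∀ p ∈ s, δ p < N) (w : ℕ → ℕ → R) :
    ∑ k ∈ range N, ∑ d ∈ range N, (#{p ∈ s | κ p = k ∧ δ p = d} : R) * w k d =
      ∑ p ∈ s, w (κ p) (δ p) := by
  rw [← sum_fiberwise_of_maps_to (g := κ) (t := range N) fun p hp => mem_range.mpr (hκ p hp)]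
  refine sum_congr rfl fun k _ => ?_
  rw [← sum_fiberwise_of_maps_to (g := δ) (t := range N)
    fun p hp => mem_range.mpr (hδ p (mem_filter.mp hp).1)]
  refine sum_congr rfl fun d _ => ?_
  rw [filter_filter, ← nsmul_eq_mul, ← sum_const]
  exact sum_congr rfl fun p hp => by rw [(mem_filter.mp hp).2.1, (mem_filter.mp hp).2.2]

lemma isLowerSet_daisySet {n : ℕ} (X : Set (Fin n → Bool)) : IsLowerSet (daisySet X) :=
  fun _ _ hle ⟨x, hx, h⟩ => ⟨x, hx, hle.trans h⟩

section LowerSet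

variable {n : ℕ} {S : Set (Fin n → Bool)}

theorem nonempty_induce_iso_qcube_iff (hS : IsLowerSet S) {k : ℕ} {T : Set S} :
    Nonempty (((Qcube n).induce S).induce T ≃g Qcube k) ↔
      ∃ b t, b ≤ t ∧ t ∈ S ∧ hammingDist b t = k ∧ T = Subtype.val ⁻¹' Set.Icc b t := by
  rw [SimpleGraph.nonempty_induce_iso_iff]
  constructor
  · rintro ⟨f, rfl⟩
    obtain ⟨b, t, hbt, hk, hrange⟩ :=
      Qcube.exists_range_eq_Icc ((SimpleGraph.Embedding.induce S).comp f)
    rw [SimpleGraph.Embedding.coe_comp, Set.range_comp] at hrange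
    change Subtype.val '' _ = _ at hrange
    refine ⟨b, t, hbt, ?_, hk, ?_⟩
    · obtain ⟨v, -, hv⟩ := hrange.symm ▸ Set.right_mem_Icc.mpr hbt
      exact hv ▸ v.2
    · rw [← hrange, Set.preimage_image_eq _ Subtype.val_injective]
  · rintro ⟨b, t, hbt, ht, rfl, rfl⟩
    obtain ⟨F, hF⟩ := Qcube.exists_embedding_range_eq_Icc hbt
    have hFS (v) : F v ∈ S := hS (hF ▸ Set.mem_range_self v : F v ∈ Set.Icc b t).2 ht
    refine ⟨RelEmbedding.codRestrict S F hFS, ?_⟩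
    ext w
    simp only [Set.mem_range, Set.mem_preimage, ← hF, Subtype.ext_iff]
    rfl

lemma exists_flipCoord_mem_hammingDist_add_one (hS : IsLowerSet S) {v w : Fin n → Bool}
    (hv : v ∈ S) (hw : w ∈ S) (hvw : v ≠ w) :
    ∃ j, flipCoord v j ∈ S ∧ hammingDist (flipCoord v j) w + 1 = hammingDist v w := by
  by_cases h : ∃ j, v j = true ∧ w j = false
  · obtain ⟨j, hvj, hwj⟩ := h
    refine ⟨j, hS (fun i => ?_) hv, hammingDist_flipCoord_add_one (by simp [hvj, hwj])⟩
    by_cases hi : i = j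
    · subst hi; simp [hvj]
    · simp [hi]
  · -- every coordinate where `v` and `w` differ goes up, so flipping one of them stays below `w`
    push Not at h
    obtain ⟨j, hj⟩ : ∃ j, v j ≠ w j := by
      by_contra! h'; exact hvw (funext h')
    refine ⟨j, hS (fun i => ?_) hw, hammingDist_flipCoord_add_one hj⟩
    have hi' := h i
    by_cases hi : i = j
    · subst hi; cases hv : v i <;> cases hw : w i <;> simp_all
    · rw [flipCoord_apply_of_ne hi]; cases hv : v i <;> cases hw : w i <;> simp_all

lemma exists_walk_length_eq_hammingDist (hS : IsLowerSet S) (v w : S) :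
    ∃ p : ((Qcube n).induce S).Walk v w, p.length = hammingDist v.1 w.1 := by
  induction hm : hammingDist v.1 w.1 generalizing v with
  | zero =>
    obtain rfl : v = w := Subtype.ext (hammingDist_eq_zero.mp hm)
    exact ⟨.nil, rfl⟩
  | succ m ih =>
    obtain ⟨j, hjS, hj⟩ :=
      exists_flipCoord_mem_hammingDist_add_one hS v.2 w.2 (fun h => by simp [h] at hm)
    obtain ⟨p, hp⟩ := ih ⟨_, hjS⟩ (by change hammingDist (flipCoord v.1 j) w.1 = m; omega)
    exact ⟨.cons (show ((Qcube n).induce S).Adj v ⟨_, hjS⟩ from Qcube.adj_flipCoord v.1 j) p,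
      by simp [hp]⟩

lemma hammingDist_le_length {v w : S} (p : ((Qcube n).induce S).Walk v w) :
    hammingDist v.1 w.1 ≤ p.length := by
  induction p with
  | nil => simp
  | @cons a b c h _ ih =>
    rw [SimpleGraph.Walk.length_cons]
    have h' : hammingDist a.1 b.1 = 1 := h
    exact (hammingDist_triangle a.1 b.1 c.1).trans (by omega)

theorem dist_induce_eq_hammingDist (hS : IsLowerSet S) (v w : S) :
    ((Qcube n).induce S).dist v w = hammingDist v.1 w.1 := by
  obtain ⟨p, hp⟩ := exists_walk_length_eq_hammingDist hS v w
  obtain ⟨q, hq⟩ := p.reachable.exists_walk_length_eq_dist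
  exact le_antisymm (hp ▸ SimpleGraph.dist_le p) (hq ▸ hammingDist_le_length q)

theorem distToSet_preimage_Icc (hS : IsLowerSet S) (u : S) {b t : Fin n → Bool} (hbt : b ≤ t)
    (ht : t ∈ S) :
    distToSet ((Qcube n).induce S) u (Subtype.val ⁻¹' Set.Icc b t) =
      hammingDist u.1 (u.1 ⊓ t ⊔ b) := by
  have hmem := inf_sup_mem_Icc hbt u.1
  refine IsLeast.csInf_eq ⟨⟨⟨_, hS hmem.2 ht⟩, hmem, dist_induce_eq_hammingDist hS _ _⟩, ?_⟩
  rintro _ ⟨w, hw, rfl⟩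
  rw [dist_induce_eq_hammingDist hS]
  exact hammingDist_inf_sup_le hw

lemma image_val_preimage_Icc (hS : IsLowerSet S) {b t : Fin n → Bool} (ht : t ∈ S) :
    Subtype.val '' (Subtype.val ⁻¹' Set.Icc b t : Set S) = Set.Icc b t := by
  rw [Subtype.image_preimage_coe, Set.inter_eq_right]
  exact fun _ hw => hS hw.2 ht

open Classical in
theorem distCubeCount_eq_card (hS : IsLowerSet S) (u : S) (k d : ℕ) :
    distCubeCount ((Qcube n).induce S) u k d =
      #{p ∈ ({p | p.1 ≤ p.2 ∧ p.2 ∈ S} : Finset ((Fin n → Bool) × (Fin n → Bool))) |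
        hammingDist p.1 p.2 = k ∧ hammingDist u.1 (u.1 ⊓ p.2 ⊔ p.1) = d} := by
  rw [distCubeCount, ← Set.ncard_coe_finset]
  symm
  refine Set.ncard_congr (fun p _ => Subtype.val ⁻¹' Set.Icc p.1 p.2) ?_ ?_ ?_
  · rintro ⟨b, t⟩ hp
    simp only [mem_coe, mem_filter, mem_univ, true_and] at hp ⊢
    obtain ⟨⟨hbt, ht⟩, hk, hd⟩ := hp
    exact ⟨(nonempty_induce_iso_qcube_iff hS).mpr ⟨b, t, hbt, ht, hk, rfl⟩,
      (distToSet_preimage_Icc hS u hbt ht).trans hd⟩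
  · rintro ⟨b, t⟩ ⟨b', t'⟩ hp hp' h
    simp only [mem_coe, mem_filter, mem_univ, true_and] at hp hp' h
    have := congrArg (Subtype.val '' ·) h
    simp only [image_val_preimage_Icc hS hp.1.2, image_val_preimage_Icc hS hp'.1.2] at this
    exact Prod.ext_iff.mpr ((Set.Icc_eq_Icc_iff hp.1.1).mp this)
  · rintro T ⟨hT, hd⟩
    obtain ⟨b, t, hbt, ht, hk, rfl⟩ := (nonempty_induce_iso_qcube_iff hS).mp hT
    refine ⟨(b, t), ?_, rfl⟩
    simp only [mem_coe, mem_filter, mem_univ, true_and]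
    exact ⟨⟨hbt, ht⟩, hk, (distToSet_preimage_Icc hS u hbt ht).symm.trans hd⟩

section Weight

variable {R : Type*} [CommRing R]

/-- The factor of coordinate `j` in `[b ≤ t] x ^ dim [b, t] (-x) ^ d(u, [b, t])`, evaluated at
`μ = u j`, `β = b j`, `τ = t j`. -/
def coordWeight (x : R) (μ β τ : Bool) : R :=
  if β ≤ τ then (if β ≠ τ then x else 1) * (if μ ≠ μ ⊓ τ ⊔ β then -x else 1) else 0

lemma pow_hammingDist_eq_prod {ι : Type*} [Fintype ι] (x : R) (v w : ι → Bool) :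
    x ^ hammingDist v w = ∏ j, if v j ≠ w j then x else 1 := by
  rw [hammingDist, ← prod_const, prod_filter]

open Classical in
lemma ite_le_mul_pow_eq_prod_coordWeight {ι : Type*} [Fintype ι] (x : R) (u b t : ι → Bool) :
    (if b ≤ t then x ^ hammingDist b t * (-x) ^ hammingDist u (u ⊓ t ⊔ b) else 0) =
      ∏ j, coordWeight x (u j) (b j) (t j) := by
  simp only [coordWeight, prod_ite_zero, Pi.le_def, pow_hammingDist_eq_prod, ← prod_mul_distrib,
    Pi.sup_apply, Pi.inf_apply, mem_univ, forall_const]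

lemma sum_coordWeight_false_true (x : R) : ∑ β, coordWeight x false β true = 0 := by
  simp [coordWeight]

lemma sum_sum_coordWeight (x : R) (μ : Bool) : ∑ τ, ∑ β, coordWeight x μ β τ = 1 := by
  cases μ <;> simp [coordWeight, Bool.le_iff_imp]

open Classical in
theorem sum_pow_mul_pow_eq_one (hS : IsLowerSet S) {u : Fin n → Bool} (hu : u ∈ S) (x : R) :
    ∑ p ∈ ({p | p.1 ≤ p.2 ∧ p.2 ∈ S} : Finset ((Fin n → Bool) × (Fin n → Bool))),
      x ^ hammingDist p.1 p.2 * (-x) ^ hammingDist u (u ⊓ p.2 ⊔ p.1) = 1 := by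
  have hvanish (t : Fin n → Bool) (ht : t ∉ S) : ∏ j, ∑ β, coordWeight x (u j) β (t j) = 0 := by
    obtain ⟨j, hj⟩ : ∃ j, ¬t j ≤ u j := by
      by_contra! h; exact ht (hS h hu)
    refine prod_eq_zero (mem_univ j) ?_
    obtain ⟨htj, huj⟩ : t j = true ∧ u j = false := by
      cases htj : t j <;> cases huj : u j <;> simp_all
    rw [htj, huj, sum_coordWeight_false_true]
  calc _ = ∑ t : Fin n → Bool,
        if t ∈ S then ∑ b : Fin n → Bool, ∏ j, coordWeight x (u j) (b j) (t j) else 0 := by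
        rw [sum_filter, Fintype.sum_prod_type_right]
        refine sum_congr rfl fun t _ => ?_
        split_ifs with ht
        · simp [ht, ite_le_mul_pow_eq_prod_coordWeight]
        · simp [ht]
    _ = ∑ t : Fin n → Bool, ∏ j, ∑ β, coordWeight x (u j) β (t j) := by
        refine sum_congr rfl fun t _ => ?_
        split_ifs with ht
        · exact (Fintype.prod_sum fun j β => coordWeight x (u j) β (t j)).symm
        · exact (hvanish t ht).symm
    _ = ∏ j, ∑ τ, ∑ β, coordWeight x (u j) β τ :=
        (Fintype.prod_sum fun j τ => ∑ β, coordWeight x (u j) β τ).symm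
    _ = 1 := prod_eq_one fun j _ => sum_sum_coordWeight x (u j)

end Weight

end LowerSet

theorem daisy_cube_distCubePolynomial_at_neg (n : ℕ) (X : Set (Fin n → Bool))
    (u : ↥(daisySet X)) (x : ℝ) :
    ∑ k ∈ Finset.range (2 ^ n + 1), ∑ d ∈ Finset.range (2 ^ n + 1),
      (distCubeCount ((Qcube n).induce (daisySet X)) u k d : ℝ) * x ^ k * (-x) ^ d = 1 := by
  have hS := isLowerSet_daisySet X
  have hbound (v w : Fin n → Bool) : hammingDist v w < 2 ^ n + 1 :=
    hammingDist_le_card_fintype.trans_lt <| by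
      simpa using Nat.lt_two_pow_self.trans (Nat.lt_succ_self _)
  simp_rw [mul_assoc, distCubeCount_eq_card hS u]
  rw [sum_range_sum_range_card_filter_mul _ _ _ (fun p _ => hbound _ _) (fun p _ => hbound _ _)]
  exact sum_pow_mul_pow_eq_one hS u.2 x
end

section
/- Let u and b be vertices of the n-cube Q_n and let G be the subgraph of Q_n induced by the interval I_{Q_n}(0^n, b). Then D_{G,u}(x, −x) = (−x)^{d(u,G)}, where d(u,G) = min_{v ∈ V(G)} d_{Q_n}(u,v) and D_{G,u} is the distance cube polynomial counting induced subcubes of G according to their dimension and their distance from u in Q_n. -/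
/-!
An induced subgraph of `Q_n` isomorphic to `Q_k` is a `k`-dimensional face: the words with
`n - k` coordinates fixed (encoded by `g : Fin n → Option Bool`, with `none` marking the free
coordinates). Indeed, an injective, adjacency-preserving map `Q_k → Q_n` sends all
edges of direction `j` to edges of one direction `σ j`, since two vertices at distance two have
exactly two common neighbours. The interval `I(0^n, b)` is the face whose free coordinates form
the support of `b`, and the distance from `u` to a face is attained at the projection of `u`.
Hence the sum over subfaces factorises over the coordinates: a free coordinate of the interval
contributes `x + 1 - x = 1` (the subface leaves it free, or fixes it to `u i`, or to `!u i`),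
and a coordinate fixed to `c` contributes `1` or `-x` according as `u i = c` or not.
-/

open Finset Function

def flipAt {n : ℕ} (w : Fin n → Bool) (i : Fin n) : Fin n → Bool :=
  update w i (!w i)

section Hamming

variable {n : ℕ}

@[simp]
lemma flipAt_apply_self (w : Fin n → Bool) (i : Fin n) : flipAt w i i = !w i := by
  simp [flipAt]

lemma flipAt_apply_of_ne (w : Fin n → Bool) {i j : Fin n} (h : j ≠ i) : flipAt w i j = w j := by
  simp [flipAt, h]

@[simp]
lemma flipAt_flipAt (w : Fin n → Bool) (i : Fin n) : flipAt (flipAt w i) i = w := by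
  ext j
  by_cases h : j = i <;> simp [flipAt, update_apply, h]

lemma flipAt_comm (w : Fin n → Bool) (i j : Fin n) :
    flipAt (flipAt w i) j = flipAt (flipAt w j) i := by
  ext l
  simp only [flipAt, update_apply]
  grind

lemma hammingDist_flipAt_self (w : Fin n → Bool) (i : Fin n) :
    hammingDist w (flipAt w i) = 1 := by
  refine card_eq_one.mpr ⟨i, ?_⟩
  ext j
  simp only [flipAt, update_apply, mem_filter, mem_univ, true_and, mem_singleton]
  grind

lemma exists_eq_flipAt_of_hammingDist_eq_one {x y : Fin n → Bool} (h : hammingDist x y = 1) :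
    ∃ i, y = flipAt x i := by
  obtain ⟨i, hi⟩ := card_eq_one.mp h
  refine ⟨i, funext fun j => ?_⟩
  have hj := Finset.ext_iff.mp hi j
  simp only [flipAt, update_apply, mem_filter, mem_univ, true_and, mem_singleton] at hj ⊢
  split_ifs with hji
  · subst hji; cases hx : x j <;> cases hy : y j <;> simp_all
  · exact not_not.mp fun hne => hji (hj.mp (Ne.symm hne))

lemma hammingDist_flipAt_add_one {x y : Fin n → Bool} {i : Fin n} (h : x i ≠ y i) :
    hammingDist (flipAt x i) y + 1 = hammingDist x y := by
  have hfilter : ({j | flipAt x i j ≠ y j} : Finset (Fin n)) =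
      ({j | x j ≠ y j} : Finset (Fin n)).erase i := by
    ext j
    simp only [flipAt, update_apply, mem_filter, mem_univ, true_and, mem_erase]
    split_ifs with hji
    · subst hji; cases hx : x j <;> cases hy : y j <;> simp_all
    · simp [hji]
  rw [hammingDist, hfilter, card_erase_add_one (by simpa using h), hammingDist]

lemma hammingDist_flipAt_flipAt_flipAt {a b c : Fin n}
    (hab : a ≠ b) (hac : a ≠ c) (hbc : b ≠ c) (w : Fin n → Bool) : hammingDist (flipAt w b) (flipAt (flipAt w a) c) = 3 := by
  refine card_eq_three.mpr ⟨a, b, c, hab, hac, hbc, ?_⟩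
  ext j
  simp only [flipAt, update_apply, mem_filter, mem_univ, true_and, mem_insert, mem_singleton]
  grind

lemma hammingDist_eq_add_iff {x y w : Fin n → Bool} :
    hammingDist x y = hammingDist x w + hammingDist w y ↔ ∀ i, x i = y i → w i = x i := by
  have hle : ∀ a b c : Bool,
      (if a ≠ b then 1 else 0) ≤ (if a ≠ c then 1 else 0) + (if c ≠ b then 1 else 0) := by
    decide
  have hiff : ∀ a b c : Bool,
      (if a ≠ b then 1 else 0) = (if a ≠ c then 1 else 0) + (if c ≠ b then 1 else 0) ↔
        (a = b → c = a) := by decide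
  simp only [hammingDist, card_filter, ← sum_add_distrib]
  rw [sum_eq_sum_iff_of_le fun i _ => hle (x i) (y i) (w i)]
  simp only [mem_univ, forall_const]
  exact forall_congr' fun i => hiff (x i) (y i) (w i)

end Hamming

section Graph

variable {n : ℕ}

lemma Qcube.adj_iff {x y : Fin n → Bool} : (Qcube n).Adj x y ↔ hammingDist x y = 1 := Iff.rfl

lemma Qcube.adj_flipAt (w : Fin n → Bool) (i : Fin n) : (Qcube n).Adj w (flipAt w i) :=
  hammingDist_flipAt_self w i

lemma Qcube.exists_walk_length_eq_hammingDist (x y : Fin n → Bool) :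
    ∃ p : (Qcube n).Walk x y, p.length = hammingDist x y := by
  induction h : hammingDist x y generalizing x with
  | zero =>
    obtain rfl := hammingDist_eq_zero.mp h
    exact ⟨.nil, rfl⟩
  | succ m ih =>
    obtain ⟨i, hi⟩ := Function.ne_iff.mp (hammingDist_ne_zero.mp (h.trans_ne m.succ_ne_zero))
    obtain ⟨p, hp⟩ := ih (flipAt x i) (by have := hammingDist_flipAt_add_one hi; omega)
    exact ⟨.cons (adj_flipAt x i) p, by simp [hp]⟩

lemma Qcube.hammingDist_le_length {x y : Fin n → Bool} (p : (Qcube n).Walk x y) :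
    hammingDist x y ≤ p.length := by
  induction p with
  | nil => simp
  | @cons x z y hxz p ih =>
    calc hammingDist x y ≤ hammingDist x z + hammingDist z y := hammingDist_triangle x z y
      _ ≤ p.length + 1 := by rw [adj_iff.mp hxz]; omega
      _ = _ := by simp

lemma Qcube.dist_eq_hammingDist (x y : Fin n → Bool) : (Qcube n).dist x y = hammingDist x y := by
  obtain ⟨p, hp⟩ := exists_walk_length_eq_hammingDist x y
  refine le_antisymm (hp ▸ SimpleGraph.dist_le p) ?_
  obtain ⟨q, hq⟩ := SimpleGraph.Reachable.exists_walk_length_eq_dist ⟨p⟩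
  exact hq ▸ hammingDist_le_length q

lemma Qcube.induction_on_flipAt {P : (Fin n → Bool) → Prop} (x₀ : Fin n → Bool)
    (h₀ : P x₀) (hflip : ∀ x i, P x → P (flipAt x i)) (x : Fin n → Bool) : P x := by
  suffices ∀ {y z : Fin n → Bool} (p : (Qcube n).Walk y z), P y → P z from
    this (exists_walk_length_eq_hammingDist x₀ x).choose h₀
  intro y z p
  induction p with
  | nil => exact id
  | cons hadj _ ih =>
    obtain ⟨i, rfl⟩ := exists_eq_flipAt_of_hammingDist_eq_one hadj
    exact fun hy => ih (hflip _ i hy)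

lemma Qcube.eq_or_eq_flipAt_flipAt_of_adj {w v : Fin n → Bool} {a b : Fin n} (hab : a ≠ b)
    (ha : (Qcube n).Adj (flipAt w a) v) (hb : (Qcube n).Adj (flipAt w b) v) :
    v = w ∨ v = flipAt (flipAt w a) b := by
  obtain ⟨c, rfl⟩ := exists_eq_flipAt_of_hammingDist_eq_one ha
  by_cases hca : c = a
  · simp [hca]
  by_cases hcb : c = b
  · simp [hcb]
  have := hammingDist_flipAt_flipAt_flipAt hab (Ne.symm hca) (Ne.symm hcb) w
  rw [adj_iff.mp hb] at this
  omega

end Graph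

def face {n : ℕ} (g : Fin n → Option Bool) : Set (Fin n → Bool) :=
  {w | ∀ i c, g i = some c → w i = c}

def faceDim {n : ℕ} (g : Fin n → Option Bool) : ℕ :=
  #{i | g i = none}

lemma faceDim_le {n : ℕ} (g : Fin n → Option Bool) : faceDim g ≤ n :=
  (card_filter_le _ _).trans (card_fin n).le

def faceProj {n : ℕ} (g : Fin n → Option Bool) (v : Fin n → Bool) : Fin n → Bool :=
  fun i => (g i).getD (v i)

section Face

variable {n : ℕ}

lemma faceProj_mem (g : Fin n → Option Bool) (v : Fin n → Bool) : faceProj g v ∈ face g := by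
  intro i c hc
  simp [faceProj, hc]

lemma forall_mem_face_apply_eq_iff {g : Fin n → Option Bool} {i : Fin n} {c : Bool} :
    (∀ w ∈ face g, w i = c) ↔ g i = some c := by
  refine ⟨fun h => ?_, fun hc w hw => hw i c hc⟩
  have := h _ (faceProj_mem g fun _ => !c)
  cases hg : g i <;> simp_all [faceProj]

lemma face_injective : Injective (@face n) := fun g g' h =>
  funext fun i => Option.ext fun c => by
    rw [← forall_mem_face_apply_eq_iff, h, forall_mem_face_apply_eq_iff]

lemma face_subset_face_iff {g G : Fin n → Option Bool} :
    face g ⊆ face G ↔ ∀ i c, G i = some c → g i = some c := by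
  refine ⟨fun h i c hc => forall_mem_face_apply_eq_iff.mp fun w hw => h hw i c hc, ?_⟩
  exact fun h w hw i c hc => hw i c (h i c hc)

lemma Qcube.interval_eq_face (x y : Fin n → Bool) :
    interval (Qcube n) x y = face fun i => if x i = y i then some (x i) else none := by
  ext w
  simp only [interval, Qcube.dist_eq_hammingDist, hammingDist_eq_add_iff, face, Set.mem_ofPred_eq]
  refine forall_congr' fun i => ?_
  by_cases h : x i = y i <;> simp [h, eq_comm]

lemma hammingDist_comp_equiv_of_mem_face {g : Fin n → Option Bool} {k : ℕ}
    (σ : Fin k ≃ {i // g i = none}) {w w' : Fin n → Bool}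
    (hw : w ∈ face g) (hw' : w' ∈ face g) :
    hammingDist (fun j => w (σ j)) (fun j => w' (σ j)) = hammingDist w w' := by
  refine card_bij (fun j _ => (σ j).1) (by simp) (fun _ _ _ _ h => σ.injective (Subtype.ext h)) ?_
  intro i hi
  simp only [mem_filter, mem_univ, true_and] at hi
  have hgi : g i = none := by
    cases hg : g i with
    | none => rfl
    | some c => exact absurd ((hw i c hg).trans (hw' i c hg).symm) hi
  exact ⟨σ.symm ⟨i, hgi⟩, by simpa using hi, by simp⟩

noncomputable def faceEquivCube (g : Fin n → Option Bool) :
    (Qcube n).induce (face g) ≃g Qcube (faceDim g) :=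
  let σ : Fin (faceDim g) ≃ {i // g i = none} :=
    (Fintype.equivFinOfCardEq (Fintype.card_subtype _)).symm
  { toFun := fun w j => w.1 (σ j)
    invFun := fun z =>
      ⟨faceProj g fun i => if h : g i = none then z (σ.symm ⟨i, h⟩) else false,
        faceProj_mem _ _⟩
    left_inv := fun w => by
      ext i
      cases hg : g i with
      | none => simp [faceProj, hg]
      | some c => simp [faceProj, hg, w.2 i c hg]
    right_inv := fun z => by
      ext j
      simp [faceProj, (σ j).2]
    map_rel_iff' := fun {w w'} => by
      simp only [Equiv.coe_fn_mk, SimpleGraph.comap_adj, Embedding.subtype_apply, Qcube.adj_iff]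
      rw [hammingDist_comp_equiv_of_mem_face σ w.2 w'.2] }

lemma ncard_face (g : Fin n → Option Bool) : (face g).ncard = 2 ^ faceDim g := by
  rw [← Nat.card_coe_set_eq, Nat.card_congr (faceEquivCube g).toEquiv]
  simp

theorem exists_face_eq_range_of_adj {k : ℕ} {f : (Fin k → Bool) → (Fin n → Bool)}
    (hf : Injective f) (hadj : ∀ x y, (Qcube k).Adj x y → (Qcube n).Adj (f x) (f y)) :
    ∃ g, face g = Set.range f ∧ faceDim g = k := by
  let x₀ : Fin k → Bool := fun _ => false
  choose σ hσ using fun j =>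
    exists_eq_flipAt_of_hammingDist_eq_one (hadj _ _ (Qcube.adj_flipAt x₀ j))
  have hσ_inj : Injective σ := fun j j' h => by
    have := congrFun (hf ((hσ j).trans ((congrArg _ h).trans (hσ j').symm))) j
    by_contra hjj'
    simp [x₀, flipAt_apply_of_ne _ hjj'] at this
  have hdir : ∀ x j, f (flipAt x j) = flipAt (f x) (σ j) := by
    refine Qcube.induction_on_flipAt (P := fun x => ∀ j, f (flipAt x j) = flipAt (f x) (σ j))
      x₀ hσ fun y i hy j => ?_
    by_cases hji : j = i
    · rw [hji, flipAt_flipAt, hy, flipAt_flipAt]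
    have hleft := hadj _ _ (Qcube.adj_flipAt (flipAt y i) j)
    have hright := hadj _ _ (Qcube.adj_flipAt (flipAt y j) i)
    rw [hy] at hleft
    rw [hy, ← flipAt_comm] at hright
    rcases Qcube.eq_or_eq_flipAt_flipAt_of_adj (hσ_inj.ne (Ne.symm hji)) hleft hright
      with h | h
    · have := congrFun (hf h) j
      simp [flipAt_apply_of_ne _ hji] at this
    · rwa [hy]
  let g : Fin n → Option Bool := fun i => if ∃ j, σ j = i then none else some (f x₀ i)
  have hrange : Set.range f ⊆ face g := by
    rintro _ ⟨x, rfl⟩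
    induction x using Qcube.induction_on_flipAt x₀ with
    | h₀ =>
      intro i c hc
      simp only [g] at hc
      split_ifs at hc
      exact Option.some_inj.mp hc
    | hflip x j hx =>
      intro i c hc
      have hi : ¬∃ j, σ j = i := fun h => by simp [g, h] at hc
      rw [hdir, flipAt_apply_of_ne _ fun h => hi ⟨j, h.symm⟩]
      exact hx i c hc
  have hdim : faceDim g = k := by
    have : ({i | g i = none} : Finset (Fin n)) = univ.image σ := by ext; simp [g]
    rw [faceDim, this, card_image_of_injective _ hσ_inj, card_univ, Fintype.card_fin]
  refine ⟨g, (Set.eq_of_subset_of_ncard_le hrange ?_ (Set.toFinite _)).symm, hdim⟩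
  rw [ncard_face, Set.ncard_range_of_injective hf, hdim]
  simp

theorem Qcube.nonempty_induce_iso_iff {T : Set (Fin n → Bool)} {k : ℕ} :
    Nonempty ((Qcube n).induce T ≃g Qcube k) ↔ ∃ g, face g = T ∧ faceDim g = k := by
  constructor
  · rintro ⟨φ⟩
    have hinj : Injective fun z => (φ.symm z : Fin n → Bool) :=
      Subtype.val_injective.comp φ.symm.injective
    obtain ⟨g, hg, hk⟩ :=
      exists_face_eq_range_of_adj hinj fun x y h => φ.symm.map_adj_iff.mpr h
    refine ⟨g, ?_, hk⟩
    rw [hg, Set.range_comp' Subtype.val φ.symm, φ.symm.surjective.range_eq, Set.image_univ,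
      Subtype.range_coe]
  · rintro ⟨g, rfl, rfl⟩
    exact ⟨faceEquivCube g⟩

lemma hammingDist_faceProj_le (u : Fin n → Bool) {g : Fin n → Option Bool} {w : Fin n → Bool}
    (hw : w ∈ face g) : hammingDist u (faceProj g u) ≤ hammingDist u w := by
  refine card_le_card fun i hi => ?_
  simp only [mem_filter, mem_univ, true_and] at hi ⊢
  cases hg : g i with
  | none => simp [faceProj, hg] at hi
  | some c => simpa [faceProj, hw i c hg, hg] using hi

lemma Qcube.sInf_dist_face (u : Fin n → Bool) (g : Fin n → Option Bool) :
    sInf ((Qcube n).dist u '' face g) = hammingDist u (faceProj g u) := by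
  refine IsLeast.csInf_eq ⟨⟨_, faceProj_mem g u, dist_eq_hammingDist _ _⟩, ?_⟩
  rintro _ ⟨w, hw, rfl⟩
  rw [dist_eq_hammingDist]
  exact hammingDist_faceProj_le u hw

end Face

section GeneratingFunction

variable {n : ℕ}

def subfaces (G : Fin n → Option Bool) : Finset (Fin n → Option Bool) :=
  Fintype.piFinset fun i => (G i).elim univ fun c => {some c}

lemma mem_subfaces {g G : Fin n → Option Bool} : g ∈ subfaces G ↔ face g ⊆ face G := by
  rw [face_subset_face_iff, subfaces, Fintype.mem_piFinset]
  refine forall_congr' fun i => ?_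
  cases G i <;> simp

lemma Qcube.ncard_setOf_subset_face_induce_iso (u : Fin n → Bool) (G : Fin n → Option Bool)
    (k d : ℕ) :
    {T | T ⊆ face G ∧ Nonempty ((Qcube n).induce T ≃g Qcube k) ∧
      sInf ((Qcube n).dist u '' T) = d}.ncard =
      #{g ∈ subfaces G | faceDim g = k ∧ hammingDist u (faceProj g u) = d} := by
  rw [← Set.ncard_coe_finset, ← Set.ncard_image_of_injective _ face_injective]
  congr 1
  ext T
  simp only [nonempty_induce_iso_iff, coe_filter, mem_subfaces, Set.mem_image, Set.mem_ofPred_eq]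
  constructor
  · rintro ⟨hsub, ⟨g, rfl, hk⟩, hd⟩
    exact ⟨g, ⟨hsub, hk, sInf_dist_face u g ▸ hd⟩, rfl⟩
  · rintro ⟨g, ⟨hsub, hk, hd⟩, rfl⟩
    exact ⟨hsub, ⟨g, rfl, hk⟩, (sInf_dist_face u g).trans hd⟩

lemma pow_hammingDist_eq_prod_s19 {R : Type*} [CommMonoid R] (y : R) (u v : Fin n → Bool) :
    y ^ hammingDist u v = ∏ i, if u i = v i then 1 else y := by
  rw [prod_ite, prod_const_one, one_mul, prod_const]
  rfl

lemma pow_faceDim_eq_prod {R : Type*} [CommMonoid R] (x : R) (g : Fin n → Option Bool) :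
    x ^ faceDim g = ∏ i, if g i = none then x else 1 := by
  rw [prod_ite, prod_const_one, mul_one, prod_const]
  rfl

theorem sum_subfaces_pow_faceDim_mul_pow_hammingDist {R : Type*} [CommRing R] (x : R)
    (u : Fin n → Bool) (G : Fin n → Option Bool) :
    ∑ g ∈ subfaces G, x ^ faceDim g * (-x) ^ hammingDist u (faceProj g u) =
      (-x) ^ hammingDist u (faceProj G u) := by
  simp_rw [pow_faceDim_eq_prod, pow_hammingDist_eq_prod_s19, ← prod_mul_distrib]
  refine (prod_univ_sum (fun i => (G i).elim univ fun c => {some c}) fun i o =>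
    (if o = none then x else 1) * if u i = o.getD (u i) then 1 else -x).symm.trans ?_
  refine prod_congr rfl fun i _ => ?_
  cases hG : G i with
  | none => cases hu : u i <;> simp [hG, hu, faceProj, Fintype.sum_option]
  | some c => simp [hG, faceProj]

lemma sum_range_sum_range_card_mul_pow_mul_pow {ι R : Type*} [CommSemiring R] (s : Finset ι)
    (k d : ι → ℕ) {N : ℕ} (hk : ∀ a ∈ s, k a < N) (hd : ∀ a ∈ s, d a < N) (x y : R) :
    ∑ i ∈ range N, ∑ j ∈ range N, (#{a ∈ s | k a = i ∧ d a = j} : R) * x ^ i * y ^ j =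
      ∑ a ∈ s, x ^ k a * y ^ d a := by
  rw [← sum_product', ← sum_fiberwise_of_maps_to (g := fun a => (k a, d a))
    (t := range N ×ˢ range N) fun a ha => by simp [hk a ha, hd a ha]]
  refine sum_congr rfl fun p _ => ?_
  have hfiber : ∀ a ∈ {a ∈ s | (k a, d a) = p}, x ^ k a * y ^ d a = x ^ p.1 * y ^ p.2 :=
    fun a ha => by rw [← (mem_filter.mp ha).2]
  rw [sum_congr rfl hfiber, sum_const, nsmul_eq_mul, mul_assoc]
  simp [Prod.ext_iff]

end GeneratingFunction

theorem distCubePolynomial_of_interval_at_neg (n : ℕ) (u b : Fin n → Bool) (x : ℝ) :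
    ∑ k ∈ Finset.range (2 ^ n + 1), ∑ d ∈ Finset.range (2 ^ n + 1),
      (Set.ncard {T : Set (Fin n → Bool) |
          T ⊆ interval (Qcube n) (fun _ => false) b ∧
          Nonempty ((Qcube n).induce T ≃g Qcube k) ∧
          sInf ((Qcube n).dist u '' T) = d} : ℝ) * x ^ k * (-x) ^ d =
    (-x) ^ sInf ((Qcube n).dist u '' interval (Qcube n) (fun _ => false) b) := by
  obtain ⟨G, hG⟩ : ∃ G, interval (Qcube n) (fun _ => false) b = face G :=
    ⟨_, Qcube.interval_eq_face _ _⟩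
  have hlt : ∀ m ≤ n, m < 2 ^ n + 1 := fun m hm => by have := n.lt_two_pow_self; omega
  simp_rw [hG, Qcube.ncard_setOf_subset_face_induce_iso]
  rw [sum_range_sum_range_card_mul_pow_mul_pow (subfaces G) faceDim
      (fun g => hammingDist u (faceProj g u))
      (fun g _ => hlt _ (faceDim_le g))
      (fun g _ => hlt _ (hammingDist_le_card_fintype.trans (Fintype.card_fin n).le)),
    sum_subfaces_pow_faceDim_mul_pow_hammingDist, Qcube.sInf_dist_face]
end
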